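/- arXiv:2102.07188 — 5 statements merged into one kernel-verified Lean document; each statement's English description precedes it below -/
import Mathlib

section
/- The categorical kernel is a positive semi-definite kernel: for every finite collection of points h^(1), …, h^(m) in the categorical space H and all real coefficients c_1, …, c_m, one has Σ_{i=1}^m Σ_{j=1}^m c_i c_j · k_h(h^(i), h^(j)) ≥ 0. -/
/-!
The kernel factorises as `∏ k, exp ((ℓ k / d) * δ(h k, h' k))`, and each factor equals
`1 + (exp (ℓ k / d) - 1) * δ`, a nonnegative combination of positive semi-definite kernels.
By the Schur product theorem a Hadamard product of positive semi-definite matrices is again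
positive semi-definite. A kernel `K` on `S` is handled as the matrix `Matrix.of K : Matrix S S ℝ`:
Mathlib's `PosSemidef` tests it against finitely supported vectors, which is exactly
positive semi-definiteness of the kernel.
-/

open Matrix
open scoped ComplexOrder

namespace Matrix

theorem PosSemidef.finset_prod_hadamard {ι κ 𝕜 : Type*} [RCLike 𝕜] {s : Finset κ}
    {A : κ → Matrix ι ι 𝕜} (hA : ∀ k ∈ s, (A k).PosSemidef) :
    (of fun i j => ∏ k ∈ s, A k i j).PosSemidef := by
  classical
  induction s using Finset.induction_on with
  | empty =>
    convert (PosSemidef.one (n := Unit) (R := 𝕜)).submatrix fun _ : ι => ()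
    ext i j
    simp
  | insert k s hk ih =>
    have hprod := (hA k (s.mem_insert_self k)).hadamard
      (ih fun k' hk' => hA k' (Finset.mem_insert_of_mem hk'))
    convert hprod using 1
    ext i j
    simp [Finset.prod_insert hk]

theorem posSemidef_exp_mul_ite_eq {α : Type*} [DecidableEq α] {a : ℝ} (ha : 0 ≤ a) :
    (of fun x y : α => Real.exp (a * if x = y then 1 else 0)).PosSemidef := by
  have hones := (PosSemidef.one (n := Unit) (R := ℝ)).submatrix fun _ : α => ()
  have hdiag := (PosSemidef.one (n := α) (R := ℝ)).smul (sub_nonneg.2 (Real.one_le_exp ha))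
  convert hones.add hdiag using 1
  ext x y
  by_cases hxy : x = y <;> simp [hxy]

theorem PosSemidef.sum_mul_mul_nonneg {ι : Type*} [Fintype ι] {M : Matrix ι ι ℝ}
    (hM : M.PosSemidef) (c : ι → ℝ) : 0 ≤ ∑ i, ∑ j, c i * c j * M i j := by
  simpa [dotProduct, mulVec, Finset.mul_sum, mul_comm, mul_left_comm] using
    hM.dotProduct_mulVec_nonneg c

end Matrix

theorem categorical_kernel_psd_general
    (d : ℕ) (n : Fin d → ℕ) (ℓ : Fin d → ℝ) (hℓ : ∀ i, 0 ≤ ℓ i)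
    (m : ℕ) (h : Fin m → (∀ i : Fin d, Fin (n i))) (c : Fin m → ℝ) :
    0 ≤ ∑ i : Fin m, ∑ j : Fin m, c i * c j *
      Real.exp ((1 / (d : ℝ)) * ∑ k : Fin d,
        ℓ k * (if h i k = h j k then (1 : ℝ) else 0)) := by
  have hfactor : ∀ x y : ∀ k, Fin (n k),
      Real.exp ((1 / (d : ℝ)) * ∑ k, ℓ k * (if x k = y k then (1 : ℝ) else 0)) =
        ∏ k, Real.exp ((ℓ k / d) * if x k = y k then 1 else 0) := by
    intro x y
    rw [Finset.mul_sum, Real.exp_sum]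
    congr! 2 with k
    ring
  have hkernel : PosSemidef (of fun x y : ∀ k, Fin (n k) =>
      Real.exp ((1 / (d : ℝ)) * ∑ k, ℓ k * (if x k = y k then (1 : ℝ) else 0))) := by
    simp_rw [hfactor]
    exact PosSemidef.finset_prod_hadamard fun k _ =>
      (posSemidef_exp_mul_ite_eq (div_nonneg (hℓ k) d.cast_nonneg)).submatrix
        fun x : ∀ k, Fin (n k) => x k
  exact (hkernel.submatrix h).sum_mul_mul_nonneg c

/-- The categorical (exponentiated overlap) kernel
`k_h(h, h') = exp((1/d_h) Σ_i ℓ_i δ(h_i, h'_i))` on the categorical space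
`H = ∏_{i=1}^{d_h} {1, …, n_i}` is a positive semi-definite kernel. -/
theorem categorical_kernel_psd
    (d : ℕ) (hd : 0 < d) (n : Fin d → ℕ) (ℓ : Fin d → ℝ) (hℓ : ∀ i, 0 ≤ ℓ i)
    (m : ℕ) (h : Fin m → (∀ i : Fin d, Fin (n i))) (c : Fin m → ℝ) :
    0 ≤ ∑ i : Fin m, ∑ j : Fin m, c i * c j *
      Real.exp ((1 / (d : ℝ)) * ∑ k : Fin d,
        ℓ k * (if h i k = h j k then (1 : ℝ) else 0)) :=
  categorical_kernel_psd_general d n ℓ hℓ m h c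
end

section
/- For any integer n ≥ 2, any real l ≥ 0, any σ > 0, any T ≥ 1, and any points h_1, …, h_T ∈ {1, …, n}, the T × T kernel matrix K_T with entries (K_T)_{ij} = exp(l) if h_i = h_j and (K_T)_{ij} = 1 otherwise satisfies log det(I_T + σ^{−2} K_T) ≤ n · log(1 + σ^{−2} T (exp(l) + n − 1)). Consequently the maximum information gain of the single-variable categorical kernel grows as O(n log T). -/
open Matrix Finset

section Aux

variable {n : ℕ} {T : ℕ}

/-- det(1 + c•S) = ∏ (1 + c * eigenvalue) for a Hermitian real S. -/
lemma det_one_add_smul_eq_prod {S : Matrix (Fin n) (Fin n) ℝ} (hH : S.IsHermitian) (c : ℝ) :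
    ((1 : Matrix (Fin n) (Fin n) ℝ) + c • S).det = ∏ i, (1 + c * hH.eigenvalues i) := by
  set U : Matrix (Fin n) (Fin n) ℝ := (hH.eigenvectorUnitary : Matrix (Fin n) (Fin n) ℝ) with hU
  have hUU : U * star U = 1 := (Matrix.mem_unitaryGroup_iff).mp hH.eigenvectorUnitary.2
  have hdiag : (RCLike.ofReal ∘ hH.eigenvalues : Fin n → ℝ) = hH.eigenvalues := by
    funext i; simp
  have key : (1 : Matrix (Fin n) (Fin n) ℝ) + c • S
      = U * ((1 : Matrix (Fin n) (Fin n) ℝ) + c • Matrix.diagonal hH.eigenvalues) * star U := by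
    rw [Matrix.mul_add, Matrix.add_mul, Matrix.mul_one, hUU]
    congr 1
    rw [Matrix.mul_smul, Matrix.smul_mul]
    congr 1
    conv_lhs => rw [hH.spectral_theorem, Unitary.conjStarAlgAut_apply, hdiag]
  rw [key, Matrix.det_mul_right_comm, hUU, Matrix.one_mul]
  have : (1 : Matrix (Fin n) (Fin n) ℝ) + c • Matrix.diagonal hH.eigenvalues
      = Matrix.diagonal (fun i => 1 + c * hH.eigenvalues i) := by
    rw [← Matrix.diagonal_one, ← Matrix.diagonal_smul, ← Matrix.diagonal_add]
    rfl
  rw [this, Matrix.det_diagonal]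

lemma trace_eq_sum_eigenvalues {S : Matrix (Fin n) (Fin n) ℝ} (hH : S.IsHermitian) :
    S.trace = ∑ i, hH.eigenvalues i := by
  have hUU : (hH.eigenvectorUnitary : Matrix (Fin n) (Fin n) ℝ) *
      star (hH.eigenvectorUnitary : Matrix (Fin n) (Fin n) ℝ) = 1 :=
    (Matrix.mem_unitaryGroup_iff).mp hH.eigenvectorUnitary.2
  have hUU' : star (hH.eigenvectorUnitary : Matrix (Fin n) (Fin n) ℝ) *
      (hH.eigenvectorUnitary : Matrix (Fin n) (Fin n) ℝ) = 1 :=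
    (Matrix.mem_unitaryGroup_iff').mp hH.eigenvectorUnitary.2
  conv_lhs => rw [hH.spectral_theorem, Unitary.conjStarAlgAut_apply]
  rw [Matrix.trace_mul_cycle, hUU', Matrix.one_mul, Matrix.trace_diagonal]
  simp

end Aux


/-- For the single-variable categorical kernel with `n ≥ 2` values,
lengthscale `l ≥ 0`, noise `σ > 0`, and any `T ≥ 1` points `h_1, …, h_T ∈ {1, …, n}`,
the kernel matrix `K_T` (with `(K_T)_{ij} = exp(l)` if `h_i = h_j` and `1` otherwise)
satisfies `log det(I_T + σ⁻² K_T) ≤ n · log(1 + σ⁻² T (exp(l) + n − 1))`, so the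
maximum information gain grows as `O(n log T)`. -/
theorem categorical_kernel_logdet_bound
    (n : ℕ) (hn : 2 ≤ n) (l : ℝ) (hl : 0 ≤ l) (σ : ℝ) (hσ : 0 < σ)
    (T : ℕ) (hT : 1 ≤ T) (h : Fin T → Fin n) :
    Real.log (Matrix.det
      ((1 : Matrix (Fin T) (Fin T) ℝ) +
        (σ ^ 2)⁻¹ • Matrix.of fun i j => if h i = h j then Real.exp l else 1)) ≤
      (n : ℝ) * Real.log (1 + (σ ^ 2)⁻¹ * (T : ℝ) * (Real.exp l + (n : ℝ) - 1)) := by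
  classical
  set c : ℝ := (σ ^ 2)⁻¹ with hcdef
  have hc0 : 0 < c := by positivity
  set V : Matrix (Fin T) (Fin n) ℝ := Matrix.of fun i a => if h i = a then 1 else 0 with hV
  set A : Matrix (Fin n) (Fin n) ℝ := Matrix.of fun a b => if a = b then Real.exp l else 1 with hA
  set d : Fin n → ℝ := fun a => ((Finset.univ.filter fun i => h i = a).card : ℝ) with hd
  have hd0 : ∀ a, 0 ≤ d a := fun a => by positivity
  set e : Fin n → ℝ := fun a => Real.sqrt (d a) with he
  -- K = V * (A * Vᵀ)
  have hK : (Matrix.of fun i j => if h i = h j then Real.exp l else 1 :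
      Matrix (Fin T) (Fin T) ℝ) = V * (A * V.transpose) := by
    ext i j
    simp only [Matrix.mul_apply, hV, hA, Matrix.of_apply, Matrix.transpose_apply,
      ite_mul, one_mul, zero_mul, mul_ite, mul_one, mul_zero]
    rw [Finset.sum_ite_eq Finset.univ (h i)]
    simp [Finset.sum_ite_eq' Finset.univ (h j)]
  -- Vᵀ * V = diagonal d
  have hVtV : V.transpose * V = Matrix.diagonal d := by
    ext a b
    simp only [Matrix.mul_apply, Matrix.transpose_apply, hV, Matrix.of_apply,
      ite_mul, one_mul, zero_mul, Matrix.diagonal_apply]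
    by_cases hab : a = b
    · subst hab
      rw [if_pos rfl]
      have hcollapse : ∀ i : Fin T, (if h i = a then (if h i = a then (1:ℝ) else 0) else 0)
          = if h i = a then 1 else 0 := fun i => by by_cases hi : h i = a <;> simp [hi]
      rw [Finset.sum_congr rfl fun i _ => hcollapse i]
      simp [hd]
    · rw [if_neg hab]
      refine Finset.sum_eq_zero fun i _ => ?_
      by_cases h1 : h i = a
      · rw [if_pos h1, if_neg (h1 ▸ hab)]
      · rw [if_neg h1]
  -- diagonal e * diagonal e = diagonal d
  have hee : Matrix.diagonal e * Matrix.diagonal e = Matrix.diagonal d := by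
    rw [Matrix.diagonal_mul_diagonal]
    rw [show (fun i => e i * e i) = d from funext fun a => Real.mul_self_sqrt (hd0 a)]
  set S : Matrix (Fin n) (Fin n) ℝ := Matrix.diagonal e * A * Matrix.diagonal e with hS
  -- determinant chain
  have hdet : ((1 : Matrix (Fin T) (Fin T) ℝ) +
      c • Matrix.of fun i j => if h i = h j then Real.exp l else 1).det
      = ((1 : Matrix (Fin n) (Fin n) ℝ) + c • S).det := by
    rw [hK]
    have h1 : c • (V * (A * V.transpose)) = (c • V) * (A * V.transpose) := by
      rw [Matrix.smul_mul]
    rw [h1, Matrix.det_one_add_mul_comm]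
    have h2 : (A * V.transpose) * (c • V) = c • (A * Matrix.diagonal d) := by
      rw [Matrix.mul_smul, Matrix.mul_assoc, hVtV]
    rw [h2, ← hee, ← Matrix.mul_assoc]
    have h3 : c • (A * Matrix.diagonal e * Matrix.diagonal e)
        = (c • (A * Matrix.diagonal e)) * Matrix.diagonal e := by
      rw [Matrix.smul_mul]
    rw [h3, Matrix.det_one_add_mul_comm]
    congr 1
    rw [Matrix.mul_smul, hS]
    congr 1
    rw [← Matrix.mul_assoc]
  -- A is PSD
  have hA_psd : A.PosSemidef := by
    refine Matrix.posSemidef_iff_dotProduct_mulVec.mpr ⟨?_, ?_⟩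
    · ext a b
      simp only [Matrix.conjTranspose_apply, hA, Matrix.of_apply, star_trivial]
      by_cases hab : a = b
      · subst hab; rfl
      · rw [if_neg hab, if_neg (Ne.symm hab)]
    · intro x
      have hrw : ∀ a b, A a b * x b = x b + (if a = b then (Real.exp l - 1) * x b else 0) := by
        intro a b
        simp only [hA, Matrix.of_apply]
        by_cases hab : a = b <;> simp [hab] <;> ring
      have hinner : ∀ a, ∑ b, A a b * x b = (∑ b, x b) + (Real.exp l - 1) * x a := by
        intro a
        rw [Finset.sum_congr rfl fun b _ => hrw a b, Finset.sum_add_distrib]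
        congr 1
        rw [Finset.sum_ite_eq Finset.univ a (fun b => (Real.exp l - 1) * x b)]
        simp
      have : dotProduct (star x) (A *ᵥ x)
          = (∑ a, x a) * (∑ b, x b) + (Real.exp l - 1) * ∑ a, x a * x a := by
        simp only [dotProduct, Matrix.mulVec, star_trivial, Pi.star_apply]
        rw [Finset.sum_congr rfl fun a _ => congrArg (x a * ·) (hinner a)]
        rw [Finset.sum_congr rfl fun a _ => mul_add (x a) (∑ b, x b) ((Real.exp l - 1) * x a)]
        rw [Finset.sum_add_distrib, ← Finset.sum_mul]
        congr 1
        rw [Finset.mul_sum]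
        exact Finset.sum_congr rfl fun a _ => by ring
      rw [this]
      have h1 : (0:ℝ) ≤ (∑ a, x a) * (∑ b, x b) := mul_self_nonneg _
      have h2 : (0:ℝ) ≤ Real.exp l - 1 := by
        have := Real.one_le_exp hl; linarith
      have h3 : (0:ℝ) ≤ ∑ a, x a * x a :=
        Finset.sum_nonneg fun a _ => mul_self_nonneg _
      positivity
  -- S is PSD
  have hS_psd : S.PosSemidef := by
    have := hA_psd.mul_mul_conjTranspose_same (Matrix.diagonal e)
    have hct : (Matrix.diagonal e)ᴴ = Matrix.diagonal e := by
      rw [Matrix.diagonal_conjTranspose]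
      congr 1
    rwa [hct] at this
  set μ : Fin n → ℝ := hS_psd.1.eigenvalues with hμ
  have hμ0 : ∀ i, 0 ≤ μ i := hS_psd.eigenvalues_nonneg
  -- trace of S
  have htrS : S.trace = (T : ℝ) * Real.exp l := by
    have hdiagS : ∀ a, S a a = d a * Real.exp l := by
      intro a
      rw [hS, Matrix.mul_assoc, Matrix.diagonal_mul, Matrix.mul_diagonal]
      simp only [hA, Matrix.of_apply, eq_self_iff_true, if_true, he]
      linear_combination Real.exp l * Real.mul_self_sqrt (hd0 a)
    rw [Matrix.trace]
    simp only [Matrix.diag]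
    rw [Finset.sum_congr rfl fun a _ => hdiagS a, ← Finset.sum_mul]
    congr 1
    rw [hd]
    rw [← Nat.cast_sum]
    congr 1
    exact (Finset.card_eq_sum_card_fiberwise (fun i _ => Finset.mem_univ (h i))).symm.trans
      (by simp)
  have htrμ : ∑ i, μ i = (T : ℝ) * Real.exp l := by
    rw [← trace_eq_sum_eigenvalues hS_psd.1, htrS]
  -- eigenvalue bound
  set R : ℝ := (T : ℝ) * (Real.exp l + (n : ℝ) - 1) with hR
  have hmono : ∀ i, μ i ≤ R := by
    intro i
    have h1 : μ i ≤ ∑ j, μ j :=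
      Finset.single_le_sum (fun j _ => hμ0 j) (Finset.mem_univ i)
    rw [htrμ] at h1
    refine h1.trans ?_
    have hT1 : (1:ℝ) ≤ (T:ℝ) := by exact_mod_cast hT
    have hn2 : (2:ℝ) ≤ (n:ℝ) := by exact_mod_cast hn
    have : Real.exp l ≤ Real.exp l + (n:ℝ) - 1 := by linarith
    nlinarith [Real.exp_pos l]
  -- put it together
  rw [hdet, det_one_add_smul_eq_prod hS_psd.1 c]
  have hprod_pos : (0:ℝ) < ∏ i, (1 + c * μ i) :=
    Finset.prod_pos fun i _ => by
      show (0:ℝ) < 1 + c * μ i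
      nlinarith [hμ0 i, hc0]
  have hprod_le : ∏ i, (1 + c * μ i) ≤ (1 + c * R) ^ n := by
    have := Finset.prod_le_prod (s := Finset.univ) (f := fun i => 1 + c * μ i)
      (g := fun _ => 1 + c * R) (fun i _ => by
        show (0:ℝ) ≤ 1 + c * μ i
        nlinarith [hμ0 i, hc0])
      (fun i _ => by
        show (1:ℝ) + c * μ i ≤ 1 + c * R
        nlinarith [hmono i, hc0])
    simpa using this
  calc Real.log (∏ i, (1 + c * μ i)) ≤ Real.log ((1 + c * R) ^ n) :=
        Real.log_le_log hprod_pos hprod_le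
    _ = (n : ℝ) * Real.log (1 + c * R) := by rw [Real.log_pow]
    _ = (n : ℝ) * Real.log (1 + c * (T : ℝ) * (Real.exp l + (n : ℝ) - 1)) := by
        rw [hR]; ring_nf
end

section
/- For any points h^(1), …, h^(T) in the categorical space H = ∏_{m=1}^{d_h} {1, …, n_m}, lengthscales ℓ_1, …, ℓ_{d_h} ≥ 0, and σ > 0, the kernel matrix K_T of the categorical kernel k_h satisfies log det(I_T + σ^{−2} K_T) ≤ Ñ · log(1 + σ^{−2} T · exp((1/d_h) Σ_{m=1}^{d_h} ℓ_m)), where Ñ = ∏_{m=1}^{d_h} n_m. Consequently the maximum information gain of the categorical kernel grows as O(Ñ log T). -/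
open scoped Matrix

open Finset in
lemma fiber_sq_nonneg {β γ : Type*} [Fintype β] [Fintype γ] [DecidableEq γ]
    (f : β → γ) (x : β → ℝ) :
    0 ≤ ∑ a, ∑ b, x a * x b * (if f a = f b then (1:ℝ) else 0) := by
  have key : ∀ a b : β, (if f a = f b then (1:ℝ) else 0)
      = ∑ c, (if f a = c then (1:ℝ) else 0) * (if f b = c then 1 else 0) := by
    intro a b
    rw [Finset.sum_eq_single (f a)]
    · simp [eq_comm]
    · intro c _ hc
      rw [if_neg (fun hh => hc hh.symm), zero_mul]
    · simp
  have h2 : (∑ a, ∑ b, x a * x b * (if f a = f b then (1:ℝ) else 0))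
      = ∑ c, (∑ a, x a * (if f a = c then (1:ℝ) else 0)) ^ 2 := by
    simp_rw [key, Finset.mul_sum]
    conv_lhs => rw [Finset.sum_congr rfl fun a _ => Finset.sum_comm]
    rw [Finset.sum_comm]
    refine Finset.sum_congr rfl fun c _ => ?_
    rw [sq, Finset.sum_mul_sum]
    exact Finset.sum_congr rfl fun a _ => Finset.sum_congr rfl fun b _ => by ring
  rw [h2]
  exact Finset.sum_nonneg fun c _ => sq_nonneg _

open Finset in
lemma kernel_quad_nonneg (d : ℕ) (n : Fin d → ℕ) (ℓ : Fin d → ℝ) (hℓ : ∀ m, 0 ≤ ℓ m)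
    [Nonempty (∀ m : Fin d, Fin (n m))] (x : (∀ m : Fin d, Fin (n m)) → ℝ) :
    0 ≤ ∑ a, ∑ b, x a * x b *
      Real.exp ((1 / (d : ℝ)) * ∑ m, ℓ m * (if a m = b m then (1:ℝ) else 0)) := by
  classical
  set α : Fin d → ℝ := fun m => Real.exp ((1/(d:ℝ)) * ℓ m) - 1 with hα
  have hαnn : ∀ m, 0 ≤ α m := by
    intro m
    have h1 : (1:ℝ) ≤ Real.exp ((1/(d:ℝ)) * ℓ m) :=
      Real.one_le_exp (mul_nonneg (by positivity) (hℓ m))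
    simp only [hα]
    linarith
  obtain ⟨z⟩ := ‹Nonempty (∀ m : Fin d, Fin (n m))›
  set r : Finset (Fin d) → (∀ m : Fin d, Fin (n m)) → (∀ m : Fin d, Fin (n m)) :=
    fun t a m => if m ∈ t then a m else z m with hr
  have hF : ∀ a b, Real.exp ((1 / (d : ℝ)) * ∑ m, ℓ m * (if a m = b m then (1:ℝ) else 0))
      = ∑ t : Finset (Fin d), (∏ m ∈ t, α m) * (if r t a = r t b then (1:ℝ) else 0) := by
    intro a b
    rw [Finset.mul_sum, Real.exp_sum]
    have hfac : ∀ m : Fin d, Real.exp ((1/(d:ℝ)) * (ℓ m * (if a m = b m then (1:ℝ) else 0)))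
        = α m * (if a m = b m then (1:ℝ) else 0) + 1 := by
      intro m
      by_cases hab : a m = b m <;> simp [hab, hα]
    simp_rw [hfac]
    rw [Finset.prod_add]
    rw [Finset.powerset_univ]
    refine Finset.sum_congr rfl fun t _ => ?_
    rw [Finset.prod_const_one, mul_one, Finset.prod_mul_distrib, Finset.prod_boole]
    congr 1
    congr 1
    apply propext
    constructor
    · intro hall
      funext m
      by_cases hm : m ∈ t
      · simp [hr, hm, hall m hm]
      · simp [hr, hm]
    · intro heq m hm
      have := congrFun heq m
      simpa [hr, hm] using this
  simp_rw [hF, Finset.mul_sum]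
  rw [Finset.sum_congr rfl fun a (_ : a ∈ univ) => Finset.sum_comm]
  rw [Finset.sum_comm]
  refine Finset.sum_nonneg fun t _ => ?_
  have heq : ∑ a, ∑ b, x a * x b * ((∏ m ∈ t, α m) * (if r t a = r t b then (1:ℝ) else 0))
      = (∏ m ∈ t, α m) * ∑ a, ∑ b, x a * x b * (if r t a = r t b then (1:ℝ) else 0) := by
    simp_rw [Finset.mul_sum]
    exact Finset.sum_congr rfl fun a _ => Finset.sum_congr rfl fun b _ => by ring
  rw [heq]
  exact mul_nonneg (Finset.prod_nonneg fun m _ => hαnn m) (fiber_sq_nonneg _ x)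

open Finset Matrix in
lemma logdet_one_add_le {N : Type*} [Fintype N] [DecidableEq N] {S : Matrix N N ℝ}
    (hS : S.PosSemidef) {t : ℝ} (ht : S.trace ≤ t) :
    Real.log ((1 + S).det) ≤ (Fintype.card N : ℝ) * Real.log (1 + t) := by
  classical
  set μ := hS.1.eigenvalues with hμ
  have hμnn : ∀ i, 0 ≤ μ i := fun i => hS.eigenvalues_nonneg i
  set U : Matrix N N ℝ := (hS.1.eigenvectorUnitary : Matrix N N ℝ) with hU
  have hU1 : U * star U = 1 := (Matrix.mem_unitaryGroup_iff).mp hS.1.eigenvectorUnitary.2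
  have hU1' : star U * U = 1 := (Matrix.mem_unitaryGroup_iff').mp hS.1.eigenvectorUnitary.2
  have hcomp : (RCLike.ofReal ∘ μ : N → ℝ) = μ := by
    funext i; simp [RCLike.ofReal_real_eq_id]
  have h1 : S = U * Matrix.diagonal μ * star U := by
    have := hS.1.spectral_theorem
    rwa [hcomp] at this
  have hsum : ∑ i, μ i = S.trace := by
    rw [h1, Matrix.trace_mul_cycle, hU1', one_mul, Matrix.trace_diagonal]
  have hdet : (1 + S).det = ∏ i, (1 + μ i) := by
    have h2 : (1 : Matrix N N ℝ) + S = U * (1 + Matrix.diagonal μ) * star U := by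
      rw [mul_add, add_mul, mul_one, hU1, ← h1]
    rw [h2, Matrix.det_mul_right_comm, hU1, one_mul, ← Matrix.diagonal_one,
      Matrix.diagonal_add, Matrix.det_diagonal]
  have heach : ∀ i, 1 + μ i ≤ 1 + t := by
    intro i
    have : μ i ≤ ∑ j, μ j := Finset.single_le_sum (fun j _ => hμnn j) (Finset.mem_univ i)
    linarith [hsum ▸ this, ht]
  have hpos : 0 < ∏ i, (1 + μ i) :=
    Finset.prod_pos fun i _ => by linarith [hμnn i]
  have hle : ∏ i, (1 + μ i) ≤ (1 + t) ^ Fintype.card N := by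
    calc ∏ i, (1 + μ i) ≤ ∏ _i : N, (1 + t) :=
          Finset.prod_le_prod (fun i _ => by linarith [hμnn i]) (fun i _ => heach i)
      _ = (1 + t) ^ Fintype.card N := by rw [Finset.prod_const, Finset.card_univ]
  rw [hdet, ← Real.log_pow]
  exact Real.log_le_log hpos hle

lemma psd_smul_real {N : Type*} [Fintype N] {A : Matrix N N ℝ} (hA : A.PosSemidef)
    {c : ℝ} (hc : 0 ≤ c) : (c • A).PosSemidef := by
  refine Matrix.PosSemidef.of_dotProduct_mulVec_nonneg ?_ fun x => ?_
  · have := hA.1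
    unfold Matrix.IsHermitian at *
    rw [Matrix.conjTranspose_smul, this, star_trivial]
  · rw [Matrix.smul_mulVec, dotProduct_smul, smul_eq_mul]
    exact mul_nonneg hc (hA.dotProduct_mulVec_nonneg x)

/-- For the multi-variable categorical kernel
`k_h(h, h') = exp((1/d_h) Σ_m ℓ_m δ(h_m, h'_m))` on `H = ∏_{m=1}^{d_h} {1, …, n_m}`,
its `T × T` kernel matrix `K_T` satisfies
`log det(I_T + σ⁻² K_T) ≤ Ñ · log(1 + σ⁻² T exp((1/d_h) Σ_m ℓ_m))`
where `Ñ = ∏_m n_m`; hence the maximum information gain grows as `O(Ñ log T)`. -/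
theorem categorical_kernel_logdet_bound_multi
    (d : ℕ) (hd : 0 < d) (n : Fin d → ℕ) (ℓ : Fin d → ℝ) (hℓ : ∀ m, 0 ≤ ℓ m)
    (σ : ℝ) (hσ : 0 < σ) (T : ℕ) (h : Fin T → (∀ m : Fin d, Fin (n m))) :
    Real.log (Matrix.det
      ((1 : Matrix (Fin T) (Fin T) ℝ) +
        (σ ^ 2)⁻¹ • Matrix.of fun i j =>
          Real.exp ((1 / (d : ℝ)) * ∑ m : Fin d,
            ℓ m * (if h i m = h j m then (1 : ℝ) else 0)))) ≤
      ((∏ m : Fin d, n m : ℕ) : ℝ) *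
        Real.log (1 + (σ ^ 2)⁻¹ * (T : ℝ) *
          Real.exp ((1 / (d : ℝ)) * ∑ m : Fin d, ℓ m)) := by
  classical
  rcases Nat.eq_zero_or_pos T with hT | hT
  · subst hT
    simp [Matrix.det_isEmpty]
  haveI : Nonempty (∀ m : Fin d, Fin (n m)) := ⟨h ⟨0, hT⟩⟩
  set e : ℝ := Real.exp ((1 / (d : ℝ)) * ∑ m : Fin d, ℓ m) with he
  set F : Matrix (∀ m : Fin d, Fin (n m)) (∀ m : Fin d, Fin (n m)) ℝ :=
    Matrix.of fun a b => Real.exp ((1 / (d : ℝ)) * ∑ m : Fin d,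
      ℓ m * (if a m = b m then (1 : ℝ) else 0)) with hF
  set E : Matrix (Fin T) (∀ m : Fin d, Fin (n m)) ℝ :=
    Matrix.of fun i a => if h i = a then (1:ℝ) else 0 with hE
  set c : (∀ m : Fin d, Fin (n m)) → ℝ := fun a => ∑ i, if h i = a then (1:ℝ) else 0 with hc
  have hcnn : ∀ a, 0 ≤ c a := fun a =>
    Finset.sum_nonneg fun i _ => by positivity
  set D2 : Matrix (∀ m : Fin d, Fin (n m)) (∀ m : Fin d, Fin (n m)) ℝ :=
    Matrix.diagonal fun a => Real.sqrt (c a) with hD2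
  set F' := (σ ^ 2)⁻¹ • F with hF'
  -- step 1 : the kernel matrix is E * F * Eᵀ
  have step1 : (Matrix.of fun i j =>
      Real.exp ((1 / (d : ℝ)) * ∑ m : Fin d,
        ℓ m * (if h i m = h j m then (1 : ℝ) else 0))) = E * (F * Eᵀ) := by
    ext i j
    simp [hE, hF, Matrix.mul_apply, ite_mul, mul_ite, Finset.sum_ite_eq]
  -- step 2 : Eᵀ * E is diagonal
  have step2 : Eᵀ * E = Matrix.diagonal c := by
    ext a b
    by_cases hab : a = b
    · subst hab
      rw [Matrix.mul_apply, Matrix.diagonal_apply_eq]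
      refine Finset.sum_congr rfl fun i _ => ?_
      simp only [hE, Matrix.transpose_apply, Matrix.of_apply]
      by_cases hia : h i = a <;> simp [hia]
    · rw [Matrix.mul_apply, Matrix.diagonal_apply_ne _ hab]
      refine Finset.sum_eq_zero fun i _ => ?_
      simp only [hE, Matrix.transpose_apply, Matrix.of_apply]
      by_cases hia : h i = a
      · rw [if_pos hia, if_neg (by rw [hia]; exact hab), one_mul]
      · rw [if_neg hia, zero_mul]
  have hD22 : D2 * D2 = Matrix.diagonal c := by
    rw [hD2, Matrix.diagonal_mul_diagonal]
    exact congrArg Matrix.diagonal (funext fun a => Real.mul_self_sqrt (hcnn a))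
  -- F is positive semidefinite
  have hFpsd : F.PosSemidef := by
    refine Matrix.PosSemidef.of_dotProduct_mulVec_nonneg ?_ fun x => ?_
    · unfold Matrix.IsHermitian
      ext a b
      simp only [hF, Matrix.conjTranspose_apply, Matrix.of_apply, star_trivial]
      congr 1
      congr 1
      refine Finset.sum_congr rfl fun m _ => ?_
      by_cases hab : a m = b m
      · rw [if_pos hab, if_pos hab.symm]
      · rw [if_neg hab, if_neg fun hh => hab hh.symm]
    · have key := kernel_quad_nonneg d n ℓ hℓ x
      rw [star_trivial]
      refine le_trans key (le_of_eq ?_)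
      simp only [dotProduct, Matrix.mulVec, hF, Matrix.of_apply, Finset.mul_sum]
      exact Finset.sum_congr rfl fun a _ => Finset.sum_congr rfl fun b _ => by
        simp [dotProduct]; ring
  have hF'psd : F'.PosSemidef := psd_smul_real hFpsd (by positivity)
  -- S is positive semidefinite
  set S := D2 * (F' * D2) with hS
  have hD2H : D2ᴴ = D2 := by
    simp [hD2, Matrix.diagonal_conjTranspose]
  have hSpsd : S.PosSemidef := by
    have := hF'psd.mul_mul_conjTranspose_same D2
    rw [hD2H] at this
    rwa [hS, ← mul_assoc]
  -- determinant chain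
  have detchain : ((1 : Matrix (Fin T) (Fin T) ℝ) +
      (σ ^ 2)⁻¹ • Matrix.of (fun i j =>
        Real.exp ((1 / (d : ℝ)) * ∑ m : Fin d,
          ℓ m * (if h i m = h j m then (1 : ℝ) else 0)))).det = (1 + S).det := by
    rw [step1]
    have e1 : (σ ^ 2)⁻¹ • (E * (F * Eᵀ)) = E * (F' * Eᵀ) := by
      rw [hF', Matrix.smul_mul, Matrix.mul_smul]
    rw [e1, Matrix.det_one_add_mul_comm]
    have e2 : F' * Eᵀ * E = (F' * D2) * D2 := by
      rw [Matrix.mul_assoc F' Eᵀ E, step2, ← hD22, ← mul_assoc]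
    rw [e2, Matrix.det_one_add_mul_comm, hS]
  -- trace of S
  have hsumc : ∑ a, c a = (T : ℝ) := by
    rw [hc]
    rw [Finset.sum_comm]
    simp [Finset.sum_ite_eq]
  have htrace : S.trace = (σ ^ 2)⁻¹ * (T : ℝ) * e := by
    have hdiag : ∀ a, S a a = (σ ^ 2)⁻¹ * e * c a := by
      intro a
      have hFaa : F a a = e := by
        simp [hF, he]
      rw [hS, ← mul_assoc, hD2]
      rw [Matrix.mul_diagonal, Matrix.diagonal_mul]
      rw [hF', Matrix.smul_apply, hFaa, smul_eq_mul]
      have hms : Real.sqrt (c a) * Real.sqrt (c a) = c a := Real.mul_self_sqrt (hcnn a)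
      linear_combination (σ ^ 2)⁻¹ * e * hms
    rw [Matrix.trace]
    simp only [Matrix.diag]
    rw [Finset.sum_congr rfl fun a _ => hdiag a, ← Finset.mul_sum, hsumc]
    ring
  rw [detchain]
  have hcard : (Fintype.card (∀ m : Fin d, Fin (n m)) : ℝ) = ((∏ m : Fin d, n m : ℕ) : ℝ) := by
    rw [Fintype.card_pi]
    simp
  rw [← hcard]
  exact logdet_one_add_le hSpsd (le_of_eq htrace)
end

section
/- Decomposition of the categorical kernel matrix: for any integer n ≥ 2, real l, and points h_1, …, h_T ∈ {1, …, n}, the T × T matrix K_T with entries (K_T)_{ij} = exp(l) if h_i = h_j and 1 otherwise satisfies K_T = Φ E Ψ^T, where Φ is the T × n matrix whose i-th row is φ(h_i), Ψ is the T × n matrix whose i-th row is ψ(h_i), and E = diag(exp(l) + n − 1, exp(l) − 1, …, exp(l) − 1). -/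
open Matrix

/-- The row vector `φ(a) ∈ ℝ^n` (0-based indexing: index `a : Fin n` represents the
categorical value `a+1 ∈ {1, …, n}`): entry `1` in column `1` (index `0`); entry `−1`
in column `a+1` (index `a`) when `a+1 ≥ 2`; entry `+1` in column `a+2` (index `a+1`)
when `a+1 ≤ n−1`; all other entries `0`. -/
def phiRow (n : ℕ) (a : Fin n) (j : Fin n) : ℝ :=
  (if (j : ℕ) = 0 then 1 else 0) +
    (if (j : ℕ) = (a : ℕ) ∧ 1 ≤ (a : ℕ) then -1 else 0) +
      (if (j : ℕ) = (a : ℕ) + 1 then 1 else 0)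

/-- The row vector `ψ(a) ∈ ℝ^n` (0-based indexing): its `j`-th entry (1-based column
`j+1`) is `1/n` if `j = 0`, `−j/n` if `1 ≤ j ≤ a`, and `(n−j)/n` if `j > a`. -/
noncomputable def psiRow (n : ℕ) (a : Fin n) (j : Fin n) : ℝ :=
  if (j : ℕ) = 0 then 1 / n
  else if (j : ℕ) ≤ (a : ℕ) then -(j : ℕ) / n
  else ((n : ℝ) - (j : ℕ)) / n

lemma sum_ite_val {n : ℕ} (c : ℕ) (f : Fin n → ℝ) :
    ∑ k : Fin n, (if (k : ℕ) = c then f k else 0) =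
      if hc : c < n then f ⟨c, hc⟩ else 0 := by
  split
  · next hc =>
    rw [Finset.sum_eq_single (⟨c, hc⟩ : Fin n)]
    · simp
    · intro k _ hk
      rw [if_neg]
      intro hx; exact hk (Fin.ext hx)
    · simp
  · next hc =>
    apply Finset.sum_eq_zero
    intro k _
    rw [if_neg]
    intro hx; exact hc (hx ▸ k.isLt)

lemma key (n : ℕ) (hn : 2 ≤ n) (l : ℝ) (a b : Fin n) :
    ∑ k : Fin n, phiRow n a k *
        (if (k : ℕ) = 0 then Real.exp l + (n : ℝ) - 1 else Real.exp l - 1) *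
        psiRow n b k = if a = b then Real.exp l else 1 := by
  have hn0 : (n : ℝ) ≠ 0 := by positivity
  set e := Real.exp l with he
  have hsplit : ∀ k : Fin n, phiRow n a k *
        (if (k : ℕ) = 0 then e + (n : ℝ) - 1 else e - 1) * psiRow n b k
      = (if (k : ℕ) = 0 then (e + (n : ℝ) - 1) * psiRow n b k else 0)
        + (if (k : ℕ) = (a : ℕ) ∧ 1 ≤ (a : ℕ) then -((e - 1) * psiRow n b k) else 0)
        + (if (k : ℕ) = (a : ℕ) + 1 then (e - 1) * psiRow n b k else 0) := by
    intro k
    unfold phiRow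
    split_ifs <;> first | (exfalso; omega) | ring
  simp only [hsplit, Finset.sum_add_distrib]
  rw [sum_ite_val, sum_ite_val]
  have h2 : ∑ k : Fin n, (if (k : ℕ) = (a : ℕ) ∧ 1 ≤ (a : ℕ) then
      -((e - 1) * psiRow n b k) else 0)
      = if 1 ≤ (a : ℕ) then -((e - 1) * psiRow n b a) else 0 := by
    by_cases ha : 1 ≤ (a : ℕ)
    · simp only [ha, and_true, if_true]
      rw [show ∑ k : Fin n, (if (k : ℕ) = (a : ℕ) then -((e - 1) * psiRow n b k) else 0)
          = if hc : (a : ℕ) < n then -((e - 1) * psiRow n b ⟨a, hc⟩) else 0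
          from sum_ite_val _ _]
      simp [a.isLt]
    · simp [ha]
  rw [h2]
  rw [dif_pos (show 0 < n by omega)]
  have psi_val : ∀ j : Fin n, (j : ℕ) ≠ 0 →
      psiRow n b j = if (j : ℕ) ≤ (b : ℕ) then -((j:ℕ) : ℝ) / n
        else ((n : ℝ) - ((j:ℕ) : ℝ)) / n := by
    intro j hj
    simp [psiRow, hj]
  have hb0 : psiRow n b ⟨0, by omega⟩ = 1 / n := by simp [psiRow]
  rw [hb0]
  rcases Nat.lt_trichotomy (a : ℕ) (b : ℕ) with hab | hab | hab
  · -- a < b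
    rw [if_neg (by intro hx; rw [hx] at hab; omega : ¬ a = b)]
    have hlt : (a : ℕ) + 1 < n := by have := b.isLt; omega
    rw [dif_pos hlt]
    rw [psi_val ⟨(a:ℕ)+1, hlt⟩ (by simp), if_pos (by simpa using by omega : ((⟨(a:ℕ)+1, hlt⟩ : Fin n) : ℕ) ≤ (b:ℕ))]
    by_cases ha : 1 ≤ (a : ℕ)
    · rw [if_pos ha, psi_val a (by omega), if_pos (by omega)]
      push_cast
      field_simp
      ring
    · rw [if_neg ha]
      have ha0 : ((a:ℕ) : ℝ) = 0 := by norm_cast; omega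
      push_cast
      rw [ha0]
      field_simp
      ring
  · -- a = b
    rw [if_pos (Fin.ext hab)]
    by_cases hlt : (a : ℕ) + 1 < n
    · rw [dif_pos hlt]
      rw [psi_val ⟨(a:ℕ)+1, hlt⟩ (by simp), if_neg (by simpa using by omega : ¬ ((⟨(a:ℕ)+1, hlt⟩ : Fin n) : ℕ) ≤ (b:ℕ))]
      by_cases ha : 1 ≤ (a : ℕ)
      · rw [if_pos ha, psi_val a (by omega), if_pos (by omega)]
        push_cast
        field_simp
        ring
      · rw [if_neg ha]
        have ha0 : ((a:ℕ) : ℝ) = 0 := by norm_cast; omega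
        push_cast
        rw [ha0]
        field_simp
        ring
    · rw [dif_neg hlt]
      have ha : 1 ≤ (a : ℕ) := by omega
      rw [if_pos ha, psi_val a (by omega), if_pos (by omega)]
      have han : ((a : ℕ) : ℝ) = (n : ℝ) - 1 := by
        have : (a : ℕ) = n - 1 := by have := a.isLt; omega
        rw [this]; push_cast [Nat.cast_sub (by omega : 1 ≤ n)]; ring
      rw [han]
      field_simp
      ring
  · -- a > b
    rw [if_neg (by intro hx; rw [hx] at hab; omega : ¬ a = b)]
    have ha : 1 ≤ (a : ℕ) := by omega
    rw [if_pos ha, psi_val a (by omega), if_neg (by omega)]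
    by_cases hlt : (a : ℕ) + 1 < n
    · rw [dif_pos hlt]
      rw [psi_val ⟨(a:ℕ)+1, hlt⟩ (by simp), if_neg (by simpa using by omega : ¬ ((⟨(a:ℕ)+1, hlt⟩ : Fin n) : ℕ) ≤ (b:ℕ))]
      push_cast
      field_simp
      ring
    · rw [dif_neg hlt]
      have han : ((a : ℕ) : ℝ) = (n : ℝ) - 1 := by
        have : (a : ℕ) = n - 1 := by have := a.isLt; omega
        rw [this]; push_cast [Nat.cast_sub (by omega : 1 ≤ n)]; ring
      rw [han]
      ring
      field_simp


/-- Decomposition of the categorical kernel matrix: `K_T = Φ E Ψᵀ`, where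
`Φ` (resp. `Ψ`) is the `T × n` matrix whose `i`-th row is `φ(h_i)` (resp. `ψ(h_i)`),
and `E = diag(exp(l) + n − 1, exp(l) − 1, …, exp(l) − 1)`. -/
theorem categorical_kernel_matrix_decomposition
    (n : ℕ) (hn : 2 ≤ n) (l : ℝ) (T : ℕ) (h : Fin T → Fin n) :
    (Matrix.of fun i j : Fin T =>
        if h i = h j then Real.exp l else (1 : ℝ)) =
      (Matrix.of fun (i : Fin T) (j : Fin n) => phiRow n (h i) j) *
        Matrix.diagonal (fun j : Fin n =>
          if (j : ℕ) = 0 then Real.exp l + (n : ℝ) - 1 else Real.exp l - 1) *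
        (Matrix.of fun (i : Fin T) (j : Fin n) => psiRow n (h i) j)ᵀ := by
  ext i j
  rw [Matrix.mul_apply]
  simp only [Matrix.mul_diagonal, Matrix.transpose_apply, Matrix.of_apply]
  rw [← key n hn l (h i) (h j)]
end

section
/- With the matrices Φ and Ψ built from points h_1, …, h_T ∈ {1, …, n}, the n × n matrix Ψ^T Φ equals Ψ_A^T F Φ_A, where F = diag(m_1, …, m_n) and m_r is the number of indices i with h_i = r. Since Ψ_A^T Φ_A = I_n, the matrix Ψ^T Φ is similar to F; in particular its characteristic polynomial is ∏_{r=1}^n (X − m_r), all its eigenvalues m_1, …, m_n are nonnegative, and Σ_{r=1}^n m_r = T. -/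
/-! Row `i` of `Φ` and `Ψ` is row `h i` of `ΦA` and `ΨA`, so grouping the sum
`Ψᵀ Φ = ∑ᵢ ψ(h i)ᵀ φ(h i)` by the value of `h i` gives `ΨAᵀ F ΦA`. Column `0` of `ΦA` is
all ones and column `k + 1` is `e_k − e_{k+1}`, so `ΨAᵀ ΦA = 1` amounts to the column sums of
`ΨA` and the differences of consecutive rows of `ΨA`. Since `ΦA ΨAᵀ = 1` too,
`charpoly (AB) = charpoly (BA)` makes `Ψᵀ Φ` and `F` share their characteristic polynomial. -/

open Matrix Polynomial

namespace Matrix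

variable {ι κ m p R : Type*} [Fintype ι] [Fintype κ] [DecidableEq κ] [CommSemiring R]

theorem transpose_submatrix_mul_submatrix (A : Matrix κ m R) (B : Matrix κ p R) (h : ι → κ) :
    (A.submatrix h id)ᵀ * B.submatrix h id
      = Aᵀ * diagonal (fun r => (Finset.univ.filter fun i => h i = r).card : κ → R) * B := by
  ext j k
  rw [mul_apply, mul_apply, ← Finset.sum_fiberwise Finset.univ h]
  refine Finset.sum_congr rfl fun r _ => ?_
  rw [Finset.sum_congr rfl fun i hi => by rw [transpose_apply, submatrix_apply, submatrix_apply,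
    (Finset.mem_filter.mp hi).2], Finset.sum_const, nsmul_eq_mul, mul_diagonal, transpose_apply,
    id, id]
  ring

end Matrix

section Rows

variable {n : ℕ}

theorem phiRow_of_val_eq_zero (a j : Fin n) (hj : (j : ℕ) = 0) : phiRow n a j = 1 := by
  simp only [phiRow]
  split_ifs <;> first | omega | norm_num

theorem phiRow_of_val_eq_succ (a j k : Fin n) (hjk : (j : ℕ) = k + 1) :
    phiRow n a j = (if a = k then 1 else 0) - (if a = j then 1 else 0) := by
  simp only [phiRow, Fin.ext_iff]
  split_ifs <;> first | omega | norm_num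

theorem sum_psiRow (j : Fin n) : ∑ a, psiRow n a j = if (j : ℕ) = 0 then 1 else 0 := by
  have hn : (n : ℝ) ≠ 0 := Nat.cast_ne_zero.mpr (Fin.pos j).ne'
  by_cases hj : (j : ℕ) = 0
  · simp [psiRow, hj, hn]
  · simp only [psiRow, hj, if_false]
    have hjn : (j : ℕ) ≤ n := j.isLt.le
    rw [Fin.sum_univ_eq_sum_range (fun a => if (j : ℕ) ≤ a then -((j : ℕ) : ℝ) / n
      else ((n : ℝ) - (j : ℕ)) / n), ← Finset.sum_range_add_sum_Ico _ hjn,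
      Finset.sum_congr rfl fun a ha => if_neg (by simpa using ha),
      Finset.sum_congr rfl fun a ha => if_pos (Finset.mem_Ico.mp ha).1]
    simp only [Finset.sum_const, Finset.card_range, Nat.card_Ico, nsmul_eq_mul, Nat.cast_sub hjn]
    field_simp
    ring

theorem psiRow_sub_psiRow_of_val_eq_succ (a b j : Fin n) (hab : (b : ℕ) = a + 1) :
    psiRow n a j - psiRow n b j = if j = b then 1 else 0 := by
  have hn : (n : ℝ) ≠ 0 := Nat.cast_ne_zero.mpr (Fin.pos j).ne'
  simp only [psiRow, Fin.ext_iff]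
  split_ifs <;> first | omega | ring1 | (field_simp; ring1)

end Rows

theorem transpose_of_psiRow_mul_of_phiRow (n : ℕ) :
    (Matrix.of (psiRow n))ᵀ * Matrix.of (phiRow n) = 1 := by
  ext j ⟨_ | k, hk⟩
  · simp only [mul_apply, transpose_apply, of_apply, phiRow_of_val_eq_zero _ ⟨0, hk⟩ rfl, mul_one,
      sum_psiRow, one_apply, Fin.ext_iff]
  · simp only [mul_apply, transpose_apply, of_apply,
      phiRow_of_val_eq_succ _ ⟨k + 1, hk⟩ ⟨k, by omega⟩ rfl, mul_sub, mul_ite, mul_one, mul_zero,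
      Finset.sum_sub_distrib, Finset.sum_ite_eq', Finset.mem_univ, if_true, one_apply]
    exact psiRow_sub_psiRow_of_val_eq_succ _ _ j rfl

theorem psiT_phi_eq_psiA_F_phiA_general
    (n : ℕ) (T : ℕ) (h : Fin T → Fin n) :
    let Φ : Matrix (Fin T) (Fin n) ℝ := Matrix.of fun i j => phiRow n (h i) j
    let Ψ : Matrix (Fin T) (Fin n) ℝ := Matrix.of fun i j => psiRow n (h i) j
    let ΦA : Matrix (Fin n) (Fin n) ℝ := Matrix.of (phiRow n)
    let ΨA : Matrix (Fin n) (Fin n) ℝ := Matrix.of (psiRow n)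
    let m : Fin n → ℕ := fun r => (Finset.univ.filter fun i => h i = r).card
    let F : Matrix (Fin n) (Fin n) ℝ := Matrix.diagonal fun r => (m r : ℝ)
    Ψᵀ * Φ = ΨAᵀ * F * ΦA ∧
      ΨAᵀ * ΦA = 1 ∧
      (Ψᵀ * Φ).charpoly = ∏ r : Fin n, (X - C ((m r : ℝ))) ∧
      (∀ r : Fin n, (0 : ℝ) ≤ (m r : ℝ)) ∧
      ∑ r : Fin n, m r = T := by
  intro Φ Ψ ΦA ΨA m F
  have hΨΦ : Ψᵀ * Φ = ΨAᵀ * F * ΦA := ΨA.transpose_submatrix_mul_submatrix ΦA h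
  have hΨAΦA : ΨAᵀ * ΦA = 1 := transpose_of_psiRow_mul_of_phiRow n
  have hcharpoly : (Ψᵀ * Φ).charpoly = F.charpoly := by
    rw [hΨΦ, charpoly_mul_comm, ← mul_assoc, mul_eq_one_comm.mp hΨAΦA, one_mul]
  refine ⟨hΨΦ, hΨAΦA, hcharpoly.trans (charpoly_diagonal _), fun r => Nat.cast_nonneg _, ?_⟩
  simpa using
    (Finset.card_eq_sum_card_fiberwise (s := Finset.univ) fun i _ => Finset.mem_univ (h i)).symm

/-- With `Φ` (resp. `Ψ`) the `T × n` matrix with `i`-th row `φ(h_i)`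
(resp. `ψ(h_i)`), `Φ_A`, `Ψ_A` the `n × n` matrices with `a`-th rows `φ(a)`, `ψ(a)`,
and `F = diag(m_1, …, m_n)` where `m_r = #{i : h_i = r}`: one has
`Ψᵀ Φ = Ψ_Aᵀ F Φ_A` with `Ψ_Aᵀ Φ_A = I_n`; hence the characteristic polynomial of
`Ψᵀ Φ` is `∏_r (X − m_r)`, all eigenvalues `m_r` are nonnegative, and `Σ_r m_r = T`. -/
theorem psiT_phi_eq_psiA_F_phiA
    (n : ℕ) (hn : 2 ≤ n) (T : ℕ) (h : Fin T → Fin n) :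
    let Φ : Matrix (Fin T) (Fin n) ℝ := Matrix.of fun i j => phiRow n (h i) j
    let Ψ : Matrix (Fin T) (Fin n) ℝ := Matrix.of fun i j => psiRow n (h i) j
    let ΦA : Matrix (Fin n) (Fin n) ℝ := Matrix.of (phiRow n)
    let ΨA : Matrix (Fin n) (Fin n) ℝ := Matrix.of (psiRow n)
    let m : Fin n → ℕ := fun r => (Finset.univ.filter fun i => h i = r).card
    let F : Matrix (Fin n) (Fin n) ℝ := Matrix.diagonal fun r => (m r : ℝ)
    Ψᵀ * Φ = ΨAᵀ * F * ΦA ∧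
      ΨAᵀ * ΦA = 1 ∧
      (Ψᵀ * Φ).charpoly = ∏ r : Fin n, (X - C ((m r : ℝ))) ∧
      (∀ r : Fin n, (0 : ℝ) ≤ (m r : ℝ)) ∧
      ∑ r : Fin n, m r = T :=
  psiT_phi_eq_psiA_F_phiA_general n T h
end
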